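/- arXiv:2409.19373 — 2 statements merged into one kernel-verified Lean document; each statement's English description precedes it below -/
import Mathlib

section
/- Let n ≥ 2 and let K ⊂ ℝⁿ be a compact strictly convex body with C^∞ boundary ∂K. Suppose there exist m ∈ ℕ with m ≥ 1 and nonzero polynomials q ∈ ℝ[x₁,…,xₙ] and p ∈ ℝ[x₁,…,xₙ,t] such that q(ξ)·A_K(ξ,t)^m + p(ξ,t) = 0 for all ξ ∈ S^{n−1} and all t ∈ ℝ with A_K(ξ,t) > 0. Then for every ξ ∈ S^{n−1}, p(ξ, h_K(ξ)) = 0 and p(ξ, −h_K(−ξ)) = 0, where h_K is the support function of K. -/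
open MeasureTheory

/-- The section function: `(n-1)`-dimensional Hausdorff measure of the hyperplane
cross-section `K ∩ {x · ξ = t}`. -/
noncomputable def secFun {n : ℕ} (K : Set (EuclideanSpace ℝ (Fin n)))
    (ξ : EuclideanSpace ℝ (Fin n)) (t : ℝ) : ℝ :=
  (μH[((n : ℝ) - 1)] (K ∩ {x : EuclideanSpace ℝ (Fin n) | (inner ℝ x ξ : ℝ) = t})).toReal

/-- The support function of `K`. -/
noncomputable def suppFun {n : ℕ} (K : Set (EuclideanSpace ℝ (Fin n)))
    (ξ : EuclideanSpace ℝ (Fin n)) : ℝ :=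
  sSup ((fun x => (inner ℝ x ξ : ℝ)) '' K)

/-- `S` is a C^∞ embedded hypersurface: locally the regular zero set of a C^∞ function. -/
def IsSmoothHypersurface {n : ℕ} (S : Set (EuclideanSpace ℝ (Fin n))) : Prop :=
  ∀ a ∈ S, ∃ (U : Set (EuclideanSpace ℝ (Fin n))) (f : EuclideanSpace ℝ (Fin n) → ℝ),
    IsOpen U ∧ a ∈ U ∧ ContDiffOn ℝ (⊤ : ℕ∞) f U ∧
    S ∩ U = {x ∈ U | f x = 0} ∧
    ∀ x ∈ S ∩ U, fderiv ℝ f x ≠ 0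

/-!
For `t` strictly between `-h_K(-ξ)` and `h_K(ξ)` the hyperplane `x · ξ = t` meets the interior of
`K` (intermediate value theorem on the convex, hence connected, interior), so `A_K(ξ, t) > 0` and
the polynomial identity holds on that open interval. As `t ↑ h_K(ξ)`, compactness and strict
convexity squeeze the sections `K ∩ {x · ξ = t}` into arbitrarily small balls around the unique
point of `K` maximizing `x · ξ`; since the `(n-1)`-dimensional Hausdorff measure on a hyperplane is
a Haar measure without atoms, `A_K(ξ, t) → 0`. Passing to the limit in `q(ξ) A_K^m + p(ξ, t) = 0`
gives `p(ξ, h_K(ξ)) = 0`, and replacing `ξ` by `-ξ` gives the other endpoint.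
-/

open Metric Filter Set Module Topology
open scoped ENNReal InnerProductSpace

section Convex

variable {E : Type*} [AddCommGroup E] [Module ℝ E] [TopologicalSpace E] [IsTopologicalAddGroup E]
  [ContinuousSMul ℝ E]

theorem Convex.exists_mem_interior_eq {K : Set E} (hK : Convex ℝ K) (hKint : (interior K).Nonempty)
    {f : E → ℝ} (hf : Continuous f) {x y : E} (hx : x ∈ K) (hy : y ∈ K) {t : ℝ}
    (ht : t ∈ Ioo (f x) (f y)) : ∃ w ∈ interior K, f w = t := by
  have hK_sub : K ⊆ closure (interior K) := by
    rw [hK.closure_interior_eq_closure_of_nonempty_interior hKint]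
    exact subset_closure
  obtain ⟨u, hut, hu⟩ :=
    mem_closure_iff.1 (hK_sub hx) _ (isOpen_Iio.preimage hf) (show f x < t from ht.1)
  obtain ⟨v, htv, hv⟩ :=
    mem_closure_iff.1 (hK_sub hy) _ (isOpen_Ioi.preimage hf) (show t < f y from ht.2)
  exact hK.interior.isPreconnected.intermediate_value hu hv hf.continuousOn
    ⟨le_of_lt hut, le_of_lt htv⟩

end Convex

theorem IsCompact.exists_superlevelSet_subset_of_isMaxOn {X : Type*} [TopologicalSpace X]
    {K : Set X} (hK : IsCompact K) {f : X → ℝ} (hf : Continuous f) {x₀ : X}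
    (hmax : IsMaxOn f K x₀) (huniq : ∀ x ∈ K, f x = f x₀ → x = x₀) {U : Set X} (hU : U ∈ 𝓝 x₀) :
    ∃ a < f x₀, K ∩ f ⁻¹' Ioi a ⊆ U := by
  have hlt : ∀ x ∈ K \ interior U, -f x₀ < -f x := fun x hx =>
    neg_lt_neg <| (hmax hx.1).lt_of_ne fun h =>
      hx.2 (huniq x hx.1 h ▸ mem_interior_iff_mem_nhds.2 hU)
  obtain ⟨a, ha, hbound⟩ :=
    (hK.diff isOpen_interior).exists_forall_le' hf.neg.continuousOn hlt
  refine ⟨-a, by linarith, fun x ⟨hx, hax⟩ => by_contra fun hxU => ?_⟩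
  have := hbound x ⟨hx, fun h => hxU (interior_subset h)⟩
  simp only [Pi.neg_apply] at this
  linarith [show -a < f x from hax]

section InnerProductSpace

variable {E : Type*} [NormedAddCommGroup E] [InnerProductSpace ℝ E]

theorem IsCompact.exists_isMaxOn_inner {K : Set E} (hK : IsCompact K) (hKne : K.Nonempty)
    (ξ : E) : ∃ x ∈ K, IsMaxOn (⟪·, ξ⟫_ℝ) K x :=
  hK.exists_isMaxOn hKne (continuous_id.inner continuous_const).continuousOn

theorem notMem_interior_of_isMaxOn_inner {K : Set E} {ξ x : E} (hξ : ξ ≠ 0)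
    (hmax : IsMaxOn (⟪·, ξ⟫_ℝ) K x) : x ∉ interior K := by
  intro hx
  have hderiv : HasFDerivAt (⟪·, ξ⟫_ℝ) (innerSL ℝ ξ) x := by
    rw [show (⟪·, ξ⟫_ℝ) = innerSL ℝ ξ from funext fun y => real_inner_comm ξ y]
    exact (innerSL ℝ ξ).hasFDerivAt
  have h := (hmax.isLocalMax (mem_interior_iff_mem_nhds.1 hx)).hasFDerivAt_eq_zero hderiv
  exact hξ (by simpa using DFunLike.congr_fun h ξ)

theorem eq_of_isMaxOn_inner_of_inner_eq {K : Set E} (hKcl : IsClosed K) (hKconv : Convex ℝ K)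
    (hKstrict : ∀ x ∈ frontier K, ∀ y ∈ frontier K, x ≠ y → ¬ segment ℝ x y ⊆ frontier K)
    {ξ x₀ : E} (hξ : ξ ≠ 0) (hx₀ : x₀ ∈ K) (hmax : IsMaxOn (⟪·, ξ⟫_ℝ) K x₀)
    {x : E} (hx : x ∈ K) (heq : ⟪x, ξ⟫_ℝ = ⟪x₀, ξ⟫_ℝ) : x = x₀ := by
  set F := K ∩ {y | ⟪y, ξ⟫_ℝ = ⟪x₀, ξ⟫_ℝ}
  have hF : F ⊆ frontier K := fun y hy => by
    rw [hKcl.frontier_eq]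
    refine ⟨hy.1, notMem_interior_of_isMaxOn_inner hξ fun z hz => ?_⟩
    exact (hmax hz).trans_eq hy.2.symm
  have hFconv : Convex ℝ F := hKconv.inter <| convex_hyperplane
    ⟨fun a b => inner_add_left a b ξ, fun c a => real_inner_smul_left a ξ c⟩ _
  by_contra hne
  exact hKstrict x (hF ⟨hx, heq⟩) x₀ (hF ⟨hx₀, rfl⟩) hne
    ((hFconv.segment_subset ⟨hx, heq⟩ ⟨hx₀, rfl⟩).trans hF)

theorem range_coe_orthogonal_add (ξ z : E) :
    range (fun w : (ℝ ∙ ξ)ᗮ => (w : E) + z) = {x | ⟪x, ξ⟫_ℝ = ⟪z, ξ⟫_ℝ} := by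
  refine Set.ext fun x => ⟨?_, fun hx => ⟨⟨x - z, ?_⟩, sub_add_cancel x z⟩⟩
  · rintro ⟨w, rfl⟩
    exact (inner_add_left _ _ _).trans <| by
      rw [Submodule.mem_orthogonal_singleton_iff_inner_left.1 w.2, zero_add]
  · rw [Submodule.mem_orthogonal_singleton_iff_inner_left, inner_sub_left, hx, sub_self]

theorem isometry_coe_orthogonal_add (ξ z : E) : Isometry fun w : (ℝ ∙ ξ)ᗮ => (w : E) + z :=
  (IsometryEquiv.addRight z).isometry.comp isometry_subtype_coe

theorem natCast_finrank_sub_one_eq_finrank_orthogonal [FiniteDimensional ℝ E] {ξ : E}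
    (hξ : ξ ≠ 0) : (finrank ℝ E : ℝ) - 1 = finrank ℝ (ℝ ∙ ξ)ᗮ := by
  rw [← Submodule.finrank_add_finrank_orthogonal (ℝ ∙ ξ), finrank_span_singleton hξ]
  push_cast
  ring

end InnerProductSpace

theorem tendsto_measure_closedBall_nhdsGT_zero {X : Type*} [MetricSpace X] [MeasurableSpace X]
    [OpensMeasurableSpace X] [ProperSpace X] (μ : Measure X) [IsFiniteMeasureOnCompacts μ]
    [NullSingletonClass μ] (x : X) : Tendsto (fun r => μ (closedBall x r)) (𝓝[>] 0) (𝓝 0) := by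
  have h := (tendsto_measure_cthickening_of_isCompact (μ := μ) (isCompact_singleton (x := x)))
    |>.mono_left (nhdsWithin_le_nhds (s := Ioi 0))
  rw [measure_singleton] at h
  exact h.congr' <| eventually_nhdsWithin_of_forall fun r hr => by
    rw [cthickening_singleton _ (le_of_lt hr)]

section Hyperplane

variable {E : Type*} [NormedAddCommGroup E] [InnerProductSpace ℝ E] [MeasurableSpace E]
  [BorelSpace E]

theorem hausdorffMeasure_levelSet_inter_closedBall {d : ℝ} (hd : 0 ≤ d) (ξ z : E) (r : ℝ) :
    μH[d] ({x | ⟪x, ξ⟫_ℝ = ⟪z, ξ⟫_ℝ} ∩ closedBall z r) =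
      μH[d] (closedBall (0 : (ℝ ∙ ξ)ᗮ) r) := by
  have hiso := isometry_coe_orthogonal_add ξ z
  rw [← range_coe_orthogonal_add, inter_comm, ← hiso.hausdorffMeasure_preimage (Or.inl hd)]
  simpa using congrArg μH[d] (hiso.preimage_closedBall 0 r)

theorem isAddHaarMeasure_hausdorffMeasure_orthogonal [FiniteDimensional ℝ E] {ξ : E}
    (hξ : ξ ≠ 0) : (μH[(finrank ℝ E : ℝ) - 1] : Measure (ℝ ∙ ξ)ᗮ).IsAddHaarMeasure := by
  rw [natCast_finrank_sub_one_eq_finrank_orthogonal hξ]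
  infer_instance

variable [FiniteDimensional ℝ E] {K : Set E} {ξ : E}

theorem hausdorffMeasure_inter_levelSet_pos (hξ : ξ ≠ 0) {w : E} (hw : w ∈ interior K) :
    0 < μH[(finrank ℝ E : ℝ) - 1] (K ∩ {x | ⟪x, ξ⟫_ℝ = ⟪w, ξ⟫_ℝ}) := by
  have := isAddHaarMeasure_hausdorffMeasure_orthogonal hξ
  have hd : (0 : ℝ) ≤ finrank ℝ E - 1 :=
    natCast_finrank_sub_one_eq_finrank_orthogonal hξ ▸ Nat.cast_nonneg _
  obtain ⟨r, hr, hball⟩ := nhds_basis_closedBall.mem_iff.1 (mem_interior_iff_mem_nhds.1 hw)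
  calc (0 : ℝ≥0∞) < μH[(finrank ℝ E : ℝ) - 1] (closedBall (0 : (ℝ ∙ ξ)ᗮ) r) :=
        measure_closedBall_pos _ _ hr
    _ = μH[(finrank ℝ E : ℝ) - 1] ({x | ⟪x, ξ⟫_ℝ = ⟪w, ξ⟫_ℝ} ∩ closedBall w r) :=
        (hausdorffMeasure_levelSet_inter_closedBall hd ξ w r).symm
    _ ≤ _ := measure_mono (fun x hx => ⟨hball hx.2, hx.1⟩ : _ ⊆ K ∩ _)

theorem hausdorffMeasure_inter_levelSet_ne_top (hK : Bornology.IsBounded K) (hξ : ξ ≠ 0)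
    (t : ℝ) :
    μH[(finrank ℝ E : ℝ) - 1] (K ∩ {x | ⟪x, ξ⟫_ℝ = t}) ≠ ∞ := by
  rcases (K ∩ {x | ⟪x, ξ⟫_ℝ = t}).eq_empty_or_nonempty with h | ⟨z, -, rfl⟩
  · simp [h]
  have := isAddHaarMeasure_hausdorffMeasure_orthogonal hξ
  have hd : (0 : ℝ) ≤ finrank ℝ E - 1 :=
    natCast_finrank_sub_one_eq_finrank_orthogonal hξ ▸ Nat.cast_nonneg _
  obtain ⟨R, hR⟩ := (isBounded_iff_subset_closedBall z).1 hK
  have hsub : K ∩ {x | ⟪x, ξ⟫_ℝ = ⟪z, ξ⟫_ℝ} ⊆ {x | ⟪x, ξ⟫_ℝ = ⟪z, ξ⟫_ℝ} ∩ closedBall z R :=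
    fun x hx => ⟨hx.2, hR hx.1⟩
  refine ne_top_of_le_ne_top ?_ (measure_mono hsub)
  rw [hausdorffMeasure_levelSet_inter_closedBall hd]
  exact measure_closedBall_lt_top.ne

theorem tendsto_hausdorffMeasure_inter_levelSet_nhdsLT (hE : 2 ≤ finrank ℝ E) (hK : IsCompact K)
    (hξ : ξ ≠ 0) {x₀ : E} (hmax : IsMaxOn (⟪·, ξ⟫_ℝ) K x₀)
    (huniq : ∀ x ∈ K, ⟪x, ξ⟫_ℝ = ⟪x₀, ξ⟫_ℝ → x = x₀) :
    Tendsto (fun t => μH[(finrank ℝ E : ℝ) - 1] (K ∩ {x | ⟪x, ξ⟫_ℝ = t})) (𝓝[<] ⟪x₀, ξ⟫_ℝ)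
      (𝓝 0) := by
  have := isAddHaarMeasure_hausdorffMeasure_orthogonal hξ
  have hd : (0 : ℝ) < finrank ℝ E - 1 := by
    have : (2 : ℝ) ≤ finrank ℝ E := by exact_mod_cast hE
    linarith
  have := Measure.nullSingletonClass_hausdorff (ℝ ∙ ξ)ᗮ hd
  have hsmall :=
    tendsto_measure_closedBall_nhdsGT_zero μH[(finrank ℝ E : ℝ) - 1] (0 : (ℝ ∙ ξ)ᗮ)
  rw [ENNReal.tendsto_nhds_zero]
  intro η hη
  obtain ⟨r, hrη, hr⟩ :=
    ((ENNReal.tendsto_nhds_zero.1 hsmall η hη).and self_mem_nhdsWithin).exists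
  obtain ⟨a, ha, hnear⟩ := hK.exists_superlevelSet_subset_of_isMaxOn
    (f := (⟪·, ξ⟫_ℝ)) (continuous_id.inner continuous_const) hmax huniq
    (ball_mem_nhds x₀ (half_pos hr))
  filter_upwards [Ioo_mem_nhdsLT ha] with t ht
  rcases (K ∩ {x | ⟪x, ξ⟫_ℝ = t}).eq_empty_or_nonempty with h | ⟨z, hzK, rfl⟩
  · simp [h]
  -- the whole section lies in `ball x₀ (r / 2)`, hence within `r` of its point `z`
  have hsub : K ∩ {x | ⟪x, ξ⟫_ℝ = ⟪z, ξ⟫_ℝ} ⊆ {x | ⟪x, ξ⟫_ℝ = ⟪z, ξ⟫_ℝ} ∩ closedBall z r :=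
    fun x hx => ⟨hx.2, mem_closedBall.2 <| by
      linarith [dist_triangle_right x z x₀, mem_ball.1 (hnear ⟨hzK, ht.1⟩),
        mem_ball.1 (hnear ⟨hx.1, ht.1.trans_eq (Eq.symm hx.2)⟩)]⟩
  calc _ ≤ _ := measure_mono hsub
    _ = μH[(finrank ℝ E : ℝ) - 1] (closedBall (0 : (ℝ ∙ ξ)ᗮ) r) :=
        hausdorffMeasure_levelSet_inter_closedBall hd.le ξ z r
    _ ≤ η := hrη

end Hyperplane

section SectionFunction

variable {n : ℕ} {K : Set (EuclideanSpace ℝ (Fin n))} {ξ : EuclideanSpace ℝ (Fin n)}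

theorem suppFun_eq_of_isMaxOn {x : EuclideanSpace ℝ (Fin n)} (hx : x ∈ K)
    (hmax : IsMaxOn (⟪·, ξ⟫_ℝ) K x) : suppFun K ξ = ⟪x, ξ⟫_ℝ :=
  IsGreatest.csSup_eq ⟨mem_image_of_mem _ hx, forall_mem_image.2 fun _ hy => hmax hy⟩

theorem secFun_eq_toReal_hausdorffMeasure (K : Set (EuclideanSpace ℝ (Fin n)))
    (ξ : EuclideanSpace ℝ (Fin n)) (t : ℝ) :
    secFun K ξ t = (μH[(finrank ℝ (EuclideanSpace ℝ (Fin n)) : ℝ) - 1]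
      (K ∩ {x | ⟪x, ξ⟫_ℝ = t})).toReal := by
  rw [finrank_euclideanSpace_fin]
  rfl

theorem secFun_neg (K : Set (EuclideanSpace ℝ (Fin n))) (ξ : EuclideanSpace ℝ (Fin n)) (t : ℝ) :
    secFun K (-ξ) (-t) = secFun K ξ t := by
  simp only [secFun, inner_neg_right, neg_inj]

theorem inner_lt_suppFun_of_mem_interior (hK : IsCompact K) (hξ : ξ ≠ 0)
    {c : EuclideanSpace ℝ (Fin n)} (hc : c ∈ interior K) : ⟪c, ξ⟫_ℝ < suppFun K ξ := by
  obtain ⟨x, hx, hmax⟩ := hK.exists_isMaxOn_inner ⟨c, interior_subset hc⟩ ξ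
  rw [suppFun_eq_of_isMaxOn hx hmax]
  refine (hmax (interior_subset hc)).lt_of_ne fun h => ?_
  exact notMem_interior_of_isMaxOn_inner hξ (fun y hy => (hmax hy).trans_eq h.symm) hc

theorem neg_suppFun_neg_lt_suppFun (hK : IsCompact K) (hKint : (interior K).Nonempty)
    (hξ : ξ ≠ 0) : -suppFun K (-ξ) < suppFun K ξ := by
  obtain ⟨c, hc⟩ := hKint
  have h₁ := inner_lt_suppFun_of_mem_interior hK hξ hc
  have h₂ := inner_lt_suppFun_of_mem_interior hK (neg_ne_zero.2 hξ) hc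
  rw [inner_neg_right] at h₂
  linarith

theorem secFun_pos (hK : IsCompact K) (hKint : (interior K).Nonempty) (hKconv : Convex ℝ K)
    (hξ : ξ ≠ 0) {t : ℝ} (ht : t ∈ Ioo (-suppFun K (-ξ)) (suppFun K ξ)) : 0 < secFun K ξ t := by
  have hKne : K.Nonempty := hKint.mono interior_subset
  have hcont : Continuous (⟪·, ξ⟫_ℝ) := continuous_id.inner continuous_const
  obtain ⟨xmax, hxmax, hmaxmax⟩ := hK.exists_isMaxOn_inner hKne ξ
  obtain ⟨xmin, hxmin, hmaxmin⟩ := hK.exists_isMaxOn_inner hKne (-ξ)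
  rw [suppFun_eq_of_isMaxOn hxmax hmaxmax, suppFun_eq_of_isMaxOn hxmin hmaxmin, inner_neg_right,
    neg_neg] at ht
  obtain ⟨w, hw, rfl⟩ := hKconv.exists_mem_interior_eq hKint hcont hxmin hxmax ht
  rw [secFun_eq_toReal_hausdorffMeasure]
  exact ENNReal.toReal_pos (hausdorffMeasure_inter_levelSet_pos hξ hw).ne'
    (hausdorffMeasure_inter_levelSet_ne_top hK.isBounded hξ _)

theorem tendsto_secFun_nhdsLT_suppFun (hn : 2 ≤ n) (hK : IsCompact K) (hKconv : Convex ℝ K)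
    (hKstrict : ∀ x ∈ frontier K, ∀ y ∈ frontier K, x ≠ y → ¬ segment ℝ x y ⊆ frontier K)
    (hKne : K.Nonempty) (hξ : ξ ≠ 0) : Tendsto (secFun K ξ) (𝓝[<] suppFun K ξ) (𝓝 0) := by
  obtain ⟨x₀, hx₀, hmax⟩ := hK.exists_isMaxOn_inner hKne ξ
  have hE : 2 ≤ finrank ℝ (EuclideanSpace ℝ (Fin n)) := by rwa [finrank_euclideanSpace_fin]
  rw [suppFun_eq_of_isMaxOn hx₀ hmax, funext (secFun_eq_toReal_hausdorffMeasure K ξ)]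
  simpa only [Function.comp_def, ENNReal.toReal_zero] using
    (ENNReal.tendsto_toReal ENNReal.zero_ne_top).comp
    (tendsto_hausdorffMeasure_inter_levelSet_nhdsLT hE hK hξ hmax fun x hx =>
      eq_of_isMaxOn_inner_of_inner_eq hK.isClosed hKconv hKstrict hξ hx₀ hmax hx)

theorem tendsto_secFun_nhdsGT_neg_suppFun_neg (hn : 2 ≤ n) (hK : IsCompact K)
    (hKconv : Convex ℝ K)
    (hKstrict : ∀ x ∈ frontier K, ∀ y ∈ frontier K, x ≠ y → ¬ segment ℝ x y ⊆ frontier K)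
    (hKne : K.Nonempty) (hξ : ξ ≠ 0) :
    Tendsto (secFun K ξ) (𝓝[>] (-suppFun K (-ξ))) (𝓝 0) := by
  have := (tendsto_secFun_nhdsLT_suppFun hn hK hKconv hKstrict hKne (neg_ne_zero.2 hξ)).comp
    tendsto_neg_nhdsGT_neg
  simpa only [Function.comp_def, secFun_neg] using this

end SectionFunction

theorem eq_zero_of_tendsto_of_eventually_mul_pow_add_eq_zero {α : Type*} [TopologicalSpace α]
    {l : Filter α} [l.NeBot] {v : α} (hl : l ≤ 𝓝 v) {f g : α → ℝ} (hf : Tendsto f l (𝓝 0))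
    (hg : ContinuousAt g v) (c : ℝ) {m : ℕ} (hm : m ≠ 0)
    (h : ∀ᶠ t in l, c * f t ^ m + g t = 0) : g v = 0 := by
  have hlim : Tendsto (fun t => c * f t ^ m + g t) l (𝓝 (c * 0 ^ m + g v)) :=
    ((hf.pow m).const_mul c).add (hg.tendsto.mono_left hl)
  have hzero : Tendsto (fun t => c * f t ^ m + g t) l (𝓝 0) :=
    tendsto_const_nhds.congr' (h.mono fun t ht => ht.symm)
  simpa [zero_pow hm] using tendsto_nhds_unique hlim hzero

theorem p_vanishes_at_support_values_general
    {n : ℕ} (hn : 2 ≤ n) (K : Set (EuclideanSpace ℝ (Fin n)))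
    (hKcpt : IsCompact K) (hKint : (interior K).Nonempty)
    (hKconv : Convex ℝ K)
    (hKstrict : ∀ x ∈ frontier K, ∀ y ∈ frontier K, x ≠ y → ¬ segment ℝ x y ⊆ frontier K)
    (m : ℕ) (hm : 1 ≤ m)
    (q : MvPolynomial (Fin n) ℝ)
    (p : Polynomial (MvPolynomial (Fin n) ℝ))
    (heq : ∀ ξ : EuclideanSpace ℝ (Fin n), ‖ξ‖ = 1 → ∀ t : ℝ, 0 < secFun K ξ t →
      MvPolynomial.eval (fun i => ξ i) q * secFun K ξ t ^ m +
        Polynomial.eval t (Polynomial.map (MvPolynomial.eval fun i => ξ i) p) = 0) :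
    ∀ ξ : EuclideanSpace ℝ (Fin n), ‖ξ‖ = 1 →
      Polynomial.eval (suppFun K ξ) (Polynomial.map (MvPolynomial.eval fun i => ξ i) p) = 0 ∧
      Polynomial.eval (-suppFun K (-ξ)) (Polynomial.map (MvPolynomial.eval fun i => ξ i) p) = 0 := by
  intro ξ hξ
  have hξ0 : ξ ≠ 0 := norm_ne_zero_iff.1 (hξ ▸ one_ne_zero)
  have hKne : K.Nonempty := hKint.mono interior_subset
  have hlt := neg_suppFun_neg_lt_suppFun hKcpt hKint hξ0
  have hm0 : m ≠ 0 := by omega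
  set P := Polynomial.map (MvPolynomial.eval fun i => ξ i) p
  have hrel : ∀ t ∈ Ioo (-suppFun K (-ξ)) (suppFun K ξ),
      MvPolynomial.eval (fun i => ξ i) q * secFun K ξ t ^ m + P.eval t = 0 :=
    fun t ht => heq ξ hξ t (secFun_pos hKcpt hKint hKconv hξ0 ht)
  constructor
  · exact eq_zero_of_tendsto_of_eventually_mul_pow_add_eq_zero (g := (P.eval ·))
      nhdsWithin_le_nhds (tendsto_secFun_nhdsLT_suppFun hn hKcpt hKconv hKstrict hKne hξ0)
      P.continuousAt _ hm0 (eventually_of_mem (Ioo_mem_nhdsLT hlt) hrel)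
  · exact eq_zero_of_tendsto_of_eventually_mul_pow_add_eq_zero (g := (P.eval ·))
      nhdsWithin_le_nhds (tendsto_secFun_nhdsGT_neg_suppFun_neg hn hKcpt hKconv hKstrict hKne hξ0)
      P.continuousAt _ hm0 (eventually_of_mem (Ioo_mem_nhdsGT hlt) hrel)

theorem p_vanishes_at_support_values
    {n : ℕ} (hn : 2 ≤ n) (K : Set (EuclideanSpace ℝ (Fin n)))
    (hKcpt : IsCompact K) (hKint : (interior K).Nonempty)
    (hKconv : Convex ℝ K)
    (hKstrict : ∀ x ∈ frontier K, ∀ y ∈ frontier K, x ≠ y → ¬ segment ℝ x y ⊆ frontier K)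
    (hKsmooth : IsSmoothHypersurface (frontier K))
    (m : ℕ) (hm : 1 ≤ m)
    (q : MvPolynomial (Fin n) ℝ) (hq : q ≠ 0)
    (p : Polynomial (MvPolynomial (Fin n) ℝ)) (hp : p ≠ 0)
    (heq : ∀ ξ : EuclideanSpace ℝ (Fin n), ‖ξ‖ = 1 → ∀ t : ℝ, 0 < secFun K ξ t →
      MvPolynomial.eval (fun i => ξ i) q * secFun K ξ t ^ m +
        Polynomial.eval t (Polynomial.map (MvPolynomial.eval fun i => ξ i) p) = 0) :
    ∀ ξ : EuclideanSpace ℝ (Fin n), ‖ξ‖ = 1 →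
      Polynomial.eval (suppFun K ξ) (Polynomial.map (MvPolynomial.eval fun i => ξ i) p) = 0 ∧
      Polynomial.eval (-suppFun K (-ξ)) (Polynomial.map (MvPolynomial.eval fun i => ξ i) p) = 0 :=
  p_vanishes_at_support_values_general hn K hKcpt hKint hKconv hKstrict m hm q p heq
end

section
/- Let n ≥ 2 and let Q ∈ ℂ[z₁,…,zₙ] be a nonzero polynomial with zero set Γ = {z ∈ ℂⁿ : Q(z) = 0}. Say that the complex hyperplane X(ξ,t) = {z ∈ ℂⁿ : ξ₁z₁ + ⋯ + ξₙzₙ = t} is tangent to Γ at a smooth point if there exists z ∈ ℂⁿ with Q(z) = 0, ξ·z = t, ∇Q(z) ≠ 0, and ∇Q(z) ∈ ℂ·ξ (the gradient ∇Q is taken with formal complex partial derivatives, and ξ ∈ ℝⁿ ⊂ ℂⁿ). Then there exists a real polynomial β on ℝⁿ whose restriction to S^{n−1} is not identically zero, such that for every ξ ∈ S^{n−1} with β(ξ) ≠ 0 the set {t ∈ ℂ : X(ξ,t) is tangent to Γ at a smooth point} is finite. -/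
/-!
The partial derivatives `∂ᵢQ` and `G = ∑ zᵢ ∂ᵢQ` are `n + 1` polynomials in `n` variables, so
modulo `Q` they satisfy a nonzero homogeneous relation `P`: a dimension count in the spaces of
polynomials of bounded degree in each variable produces it. At a point `z` where `X(ξ, t)` is
tangent, `∇Q(z) = c ξ` with `c ≠ 0` and `G(z) = c t`, so homogeneity gives `P(t, ξ) = 0`. Hence
only finitely many `t` occur for every `ξ` at which the leading coefficient of `P` in `t` does not
vanish. A real homogeneous polynomial `β` whose nonvanishing forces that of this coefficient comes
from its real part, and homogeneity moves a point where `β` does not vanish onto the sphere.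
-/

/-- The complex hyperplane `{z : ξ·z = t}` is tangent to the zero set of `Q` at a smooth
point: there is `z` with `Q(z) = 0`, `ξ·z = t`, `∇Q(z) ≠ 0` and `∇Q(z) ∈ ℂ·ξ`. -/
def IsTangentHyperplane {n : ℕ} (Q : MvPolynomial (Fin n) ℂ)
    (ξ : EuclideanSpace ℝ (Fin n)) (t : ℂ) : Prop :=
  ∃ z : Fin n → ℂ, MvPolynomial.eval z Q = 0 ∧ (∑ i, (ξ i : ℂ) * z i) = t ∧
    (fun i => MvPolynomial.eval z (MvPolynomial.pderiv i Q)) ≠ 0 ∧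
    ∃ c : ℂ, ∀ i, MvPolynomial.eval z (MvPolynomial.pderiv i Q) = c * (ξ i : ℂ)

open MvPolynomial

theorem Nat.add_pow_le_pow_add (a e n : ℕ) : (a + e) ^ n ≤ a ^ n + n * e * (a + e) ^ (n - 1) := by
  have hterm : ∀ i ∈ Finset.range n, (e + a) ^ i * a ^ (n - 1 - i) ≤ (a + e) ^ (n - 1) := by
    intro i hi
    have : i + (n - 1 - i) = n - 1 := by have := Finset.mem_range.mp hi; omega
    calc (e + a) ^ i * a ^ (n - 1 - i) ≤ (a + e) ^ i * (a + e) ^ (n - 1 - i) := by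
          rw [add_comm e a]; gcongr; omega
      _ = (a + e) ^ (n - 1) := by rw [← pow_add, this]
  have hsum := Finset.sum_le_card_nsmul _ _ _ hterm
  rw [Finset.card_range, smul_eq_mul] at hsum
  calc (a + e) ^ n = (∑ i ∈ Finset.range n, (e + a) ^ i * a ^ (n - 1 - i)) * e + a ^ n := by
        rw [geom_sum₂_mul_add, add_comm e a]
    _ ≤ n * (a + e) ^ (n - 1) * e + a ^ n := by gcongr
    _ = a ^ n + n * e * (a + e) ^ (n - 1) := by ring

/-- With `N = n k M + e`, polynomials of degree at most `N` in each variable modulo one of total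
degree `e` have dimension at most `(N + 1) ^ n - (N - e + 1) ^ n`; for large `k` the `(k + 1) ^ n`
monomials of `exists_isHomogeneous_ne_zero_dvd_aeval` outnumber it. -/
theorem Nat.exists_pow_lt_pow_add_pow (n e M : ℕ) :
    ∃ k, (n * k * M + e + 1) ^ n < (k + 1) ^ n + (n * k * M + 1) ^ n := by
  rcases n with _ | m
  · exact ⟨0, by simp⟩
  set B := (m + 1) * M + e + 1
  set C := (m + 1) * e * B ^ m
  refine ⟨C + 1, ?_⟩
  set k := C + 1
  set a := (m + 1) * k * M + 1
  have hak : a + e ≤ k * B := by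
    have : 1 ≤ k := by omega
    simp only [a, B]; nlinarith
  rw [show (m + 1) * k * M + e + 1 = a + e by omega]
  calc (a + e) ^ (m + 1) ≤ a ^ (m + 1) + (m + 1) * e * (a + e) ^ m :=
        Nat.add_pow_le_pow_add a e (m + 1)
    _ ≤ a ^ (m + 1) + (m + 1) * e * (k * B) ^ m := by gcongr
    _ = a ^ (m + 1) + k ^ m * C := by rw [mul_pow]; ring
    _ < a ^ (m + 1) + k ^ m * k := by gcongr; omega
    _ ≤ (k + 1) ^ (m + 1) + a ^ (m + 1) := by
        rw [← pow_succ, add_comm]; gcongr; omega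

namespace MvPolynomial

theorem IsHomogeneous.eval_smul {σ R : Type*} [CommSemiring R] {P : MvPolynomial σ R} {d : ℕ}
    (hP : P.IsHomogeneous d) (c : R) (x : σ → R) : eval (c • x) P = c ^ d * eval x P := by
  rw [eval_eq, eval_eq, Finset.mul_sum]
  refine Finset.sum_congr rfl fun s hs => ?_
  simp only [Pi.smul_apply, smul_eq_mul, mul_pow, Finset.prod_mul_distrib,
    Finset.prod_pow_eq_pow_sum, ← hP.degree_eq_sum_deg_support hs]
  ring

section RestrictDegree

variable {σ R : Type*} [CommSemiring R]

theorem mem_restrictDegree_iff_degreeOf_le {p : MvPolynomial σ R} {N : ℕ} :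
    p ∈ restrictDegree σ R N ↔ ∀ i, degreeOf i p ≤ N := by
  simp only [mem_restrictDegree, degreeOf_le_iff]
  exact ⟨fun h i s hs => h s hs i, fun h s hs i => h i s hs⟩

theorem mul_mem_restrictDegree {p q : MvPolynomial σ R} {a b : ℕ}
    (hp : p ∈ restrictDegree σ R a) (hq : q ∈ restrictDegree σ R b) :
    p * q ∈ restrictDegree σ R (a + b) := by
  rw [mem_restrictDegree_iff_degreeOf_le] at *
  exact fun i => (degreeOf_mul_le i p q).trans (add_le_add (hp i) (hq i))

theorem mem_restrictDegree_totalDegree (p : MvPolynomial σ R) :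
    p ∈ restrictDegree σ R p.totalDegree :=
  restrictTotalDegree_le_restrictDegree σ R _ ((mem_restrictTotalDegree _ _ _).mpr le_rfl)

end RestrictDegree

noncomputable def boundedExponentEquiv (σ : Type*) [Finite σ] (N : ℕ) :
    {s : σ →₀ ℕ | ∀ i, s i ≤ N} ≃ (σ → Fin (N + 1)) where
  toFun s i := ⟨s.1 i, Nat.lt_succ_of_le (s.2 i)⟩
  invFun g := ⟨Finsupp.equivFunOnFinite.symm fun i => (g i : ℕ), fun i => by
    simpa using Nat.le_of_lt_succ (g i).2⟩
  left_inv s := by ext i; simp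
  right_inv g := by ext i; simp

theorem finrank_restrictDegree (σ R : Type*) [Fintype σ] [CommRing R] [Nontrivial R] (N : ℕ) :
    Module.finrank R (restrictDegree σ R N) = (N + 1) ^ Fintype.card σ := by
  classical
  have : Fintype {s : σ →₀ ℕ | ∀ i, s i ≤ N} := Fintype.ofEquiv _ (boundedExponentEquiv σ N).symm
  rw [restrictDegree, Module.finrank_eq_card_basis (basisRestrictSupport R _),
    Fintype.card_congr (boundedExponentEquiv σ N), Fintype.card_fun, Fintype.card_fin]

theorem exists_ne_zero_dvd_sum_smul {σ K ι : Type*} [Fintype σ] [Field K] [Fintype ι]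
    {Q : MvPolynomial σ K} (hQ : Q ≠ 0) {N : ℕ} (hQN : Q.totalDegree ≤ N)
    (u : ι → MvPolynomial σ K) (hu : ∀ i, u i ∈ restrictDegree σ K N)
    (hcard : (N + 1) ^ Fintype.card σ <
      Fintype.card ι + (N - Q.totalDegree + 1) ^ Fintype.card σ) :
    ∃ c : ι → K, c ≠ 0 ∧ Q ∣ ∑ i, c i • u i := by
  set W := restrictDegree σ K (N - Q.totalDegree)
  have hQW : ∀ p ∈ W, Q * p ∈ restrictDegree σ K N := fun p hp => by
    simpa [Nat.add_sub_cancel' hQN] using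
      mul_mem_restrictDegree (mem_restrictDegree_totalDegree Q) hp
  let Φ : (ι → K) × W →ₗ[K] restrictDegree σ K N :=
    LinearMap.codRestrict _
      ((Fintype.linearCombination K u).coprod (-(LinearMap.mulLeft K Q ∘ₗ W.subtype)))
      (fun ⟨c, p⟩ => by
        simp only [LinearMap.coprod_apply, Fintype.linearCombination_apply, LinearMap.neg_apply,
          LinearMap.comp_apply, Submodule.subtype_apply, LinearMap.mulLeft_apply]
        rw [← sub_eq_add_neg]
        exact Submodule.sub_mem _ (Submodule.sum_mem _ fun i _ => Submodule.smul_mem _ _ (hu i))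
          (hQW p p.2))
  have hker : LinearMap.ker Φ ≠ ⊥ := LinearMap.ker_ne_bot_of_finrank_lt (by
    rwa [Module.finrank_prod, Module.finrank_fintype_fun_eq_card, finrank_restrictDegree,
      finrank_restrictDegree])
  obtain ⟨⟨c, p⟩, hcp, hne⟩ := (Submodule.ne_bot_iff _).mp hker
  have hsum : ∑ i, c i • u i = Q * p := by
    have := congrArg Subtype.val (LinearMap.mem_ker.mp hcp)
    simpa [Φ, Fintype.linearCombination_apply, add_neg_eq_zero] using this
  refine ⟨c, fun hc => hne ?_, hsum ▸ dvd_mul_right Q p⟩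
  subst hc
  have hp : p = 0 := Subtype.ext (by simpa [hQ] using hsum.symm)
  simp [hp]

theorem totalDegree_aeval_monomial_le {σ τ R : Type*} [Fintype σ] [CommSemiring R]
    {F : σ → MvPolynomial τ R} {M : ℕ} (hF : ∀ j, (F j).totalDegree ≤ M) (s : σ →₀ ℕ) :
    (aeval F (monomial s (1 : R))).totalDegree ≤ s.degree * M := by
  rw [aeval_monomial, map_one, one_mul, Finsupp.prod_fintype _ _ (fun _ => pow_zero _),
    Finsupp.degree_eq_sum, Finset.sum_mul]
  exact (totalDegree_finsetProd _ _).trans (Finset.sum_le_sum fun j _ =>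
    (totalDegree_pow _ _).trans (Nat.mul_le_mul_left _ (hF j)))

section Homogenization

variable {n : ℕ}

noncomputable def homogenizedExponent (d : ℕ) (g : Fin n → ℕ) : Fin (n + 1) →₀ ℕ :=
  Finsupp.cons (d - ∑ i, g i) (Finsupp.equivFunOnFinite.symm g)

theorem degree_homogenizedExponent {d : ℕ} {g : Fin n → ℕ} (h : ∑ i, g i ≤ d) :
    (homogenizedExponent d g).degree = d := by
  simp only [homogenizedExponent, Finsupp.degree_eq_sum, Fin.sum_univ_succ, Finsupp.cons_zero,
    Finsupp.cons_succ, Finsupp.coe_equivFunOnFinite_symm]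
  omega

theorem homogenizedExponent_injective (d : ℕ) :
    Function.Injective (homogenizedExponent (n := n) d) := fun _ _ h =>
  Finsupp.equivFunOnFinite.symm.injective (Finsupp.cons_injective2 h).2

theorem exists_isHomogeneous_ne_zero_dvd_aeval {K : Type*} [Field K]
    {Q : MvPolynomial (Fin n) K} (hQ : Q ≠ 0) (F : Fin (n + 1) → MvPolynomial (Fin n) K) :
    ∃ (d : ℕ) (P : MvPolynomial (Fin (n + 1)) K), P ≠ 0 ∧ P.IsHomogeneous d ∧ Q ∣ aeval F P := by
  set M := Finset.univ.sup fun j => (F j).totalDegree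
  have hM : ∀ j, (F j).totalDegree ≤ M := fun j =>
    Finset.le_sup (f := fun j => (F j).totalDegree) (Finset.mem_univ j)
  obtain ⟨k, hk⟩ := Nat.exists_pow_lt_pow_add_pow n Q.totalDegree M
  set d := n * k
  let s : (Fin n → Fin (k + 1)) → Fin (n + 1) →₀ ℕ := fun g => homogenizedExponent d (fun i => g i)
  have hs_degree : ∀ g, (s g).degree = d := fun g => degree_homogenizedExponent <|
    (Finset.sum_le_card_nsmul _ _ k fun i _ => Nat.lt_succ_iff.mp (g i).2).trans_eq (by simp [d])
  have hs_inj : Function.Injective s := (homogenizedExponent_injective d).comp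
    fun _ _ h => _root_.funext fun i => Fin.ext (congrFun h i)
  have hu : ∀ g, aeval F (monomial (s g) (1 : K)) ∈
      restrictDegree (Fin n) K (d * M + Q.totalDegree) := fun g =>
    restrictTotalDegree_le_restrictDegree _ _ _ <| (mem_restrictTotalDegree _ _ _).mpr <|
      (totalDegree_aeval_monomial_le hM (s g)).trans (hs_degree g ▸ Nat.le_add_right _ _)
  obtain ⟨c, hc, hQc⟩ := exists_ne_zero_dvd_sum_smul hQ (by omega) _ hu
    (by simpa [d, Nat.add_sub_cancel] using hk)
  refine ⟨d, ∑ g, c g • monomial (s g) 1, ?_, ?_, by simpa [map_sum] using hQc⟩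
  · have hli := (basisMonomials (Fin (n + 1)) K).linearIndependent.comp s hs_inj
    exact fun h0 => hc (_root_.funext (Fintype.linearIndependent_iff.mp hli c (by simpa using h0)))
  · exact (mem_homogeneousSubmodule _ _).mp <| Submodule.sum_mem _ fun g _ =>
      Submodule.smul_mem _ _ (isHomogeneous_monomial _ (hs_degree g))

end Homogenization

theorem re_eval_ofReal {σ : Type*} (p : MvPolynomial σ ℂ) (x : σ → ℝ) :
    (eval (fun i => (x i : ℂ)) p).re = eval x (AddMonoidAlgebra.map Complex.reAddGroupHom p) := by
  induction p using MvPolynomial.induction_on' with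
  | monomial s a =>
    rw [show AddMonoidAlgebra.map Complex.reAddGroupHom (monomial s a) = monomial s a.re from
      AddMonoidAlgebra.map_single _ _ _, eval_monomial, eval_monomial, Finsupp.prod, Finsupp.prod]
    simp only [← Complex.ofReal_pow, ← Complex.ofReal_prod, Complex.re_mul_ofReal]
  | add p q hp hq => simp [AddMonoidAlgebra.map_add, hp, hq]

/-- `q` is the real part of `p` rescaled so that one of its coefficients is `1`. -/
theorem IsHomogeneous.exists_real_ne_zero {σ : Type*} {p : MvPolynomial σ ℂ} {d : ℕ}
    (hpd : p.IsHomogeneous d) (hp : p ≠ 0) :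
    ∃ q : MvPolynomial σ ℝ, q ≠ 0 ∧ q.IsHomogeneous d ∧
      ∀ x : σ → ℝ, eval x q ≠ 0 → eval (fun i => (x i : ℂ)) p ≠ 0 := by
  obtain ⟨s, hs⟩ := ne_zero_iff.mp hp
  set q := AddMonoidAlgebra.map Complex.reAddGroupHom ((coeff s p)⁻¹ • p)
  have hq : ∀ m, coeff m q = ((coeff s p)⁻¹ * coeff m p).re := fun m =>
    coeff_addMonoidAlgebraMap _ _ _
  refine ⟨q, ne_zero_iff.mpr ⟨s, by simp [hq, hs]⟩, fun m hm => hpd fun h => hm ?_, fun x hx => ?_⟩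
  · simp [hq, h]
  · rw [← re_eval_ofReal, smul_eval] at hx
    exact fun h => hx (by simp [h])

theorem IsHomogeneous.exists_norm_eq_one_eval_ne_zero {ι : Type*} [Fintype ι] [Nonempty ι]
    {q : MvPolynomial ι ℝ} {d : ℕ} (hqd : q.IsHomogeneous d) (hq : q ≠ 0) :
    ∃ ξ : EuclideanSpace ℝ ι, ‖ξ‖ = 1 ∧ eval (fun i => ξ i) q ≠ 0 := by
  obtain ⟨x, hx⟩ : ∃ x, eval x q ≠ 0 := by
    by_contra! h
    exact hq (MvPolynomial.funext fun x => by simp [h x])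
  set y : EuclideanSpace ℝ ι := WithLp.toLp 2 x
  obtain ⟨u, hu, hyu⟩ : ∃ u : EuclideanSpace ℝ ι, ‖u‖ = 1 ∧ y = ‖y‖ • u := by
    by_cases hy : y = 0
    · obtain ⟨u, hu⟩ := exists_norm_eq (EuclideanSpace ℝ ι) zero_le_one
      exact ⟨u, hu, by simp [hy]⟩
    · exact ⟨‖y‖⁻¹ • y, norm_smul_inv_norm hy, (smul_inv_smul₀ (norm_ne_zero_iff.mpr hy) y).symm⟩
  refine ⟨u, hu, fun h => hx ?_⟩
  have : x = ‖y‖ • fun i => u i := _root_.funext fun i => congrArg (· i) hyu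
  rw [this, hqd.eval_smul, h, mul_zero]

theorem IsHomogeneous.isHomogeneous_leadingCoeff_finSuccEquiv {R : Type*} [CommSemiring R]
    {n d : ℕ} {P : MvPolynomial (Fin (n + 1)) R} (hP : P.IsHomogeneous d) :
    (finSuccEquiv R n P).leadingCoeff.IsHomogeneous (d - (finSuccEquiv R n P).natDegree) :=
  hP.finSuccEquiv_coeff_isHomogeneous _ _ <| Nat.add_sub_cancel' <| by
    rw [natDegree_finSuccEquiv]
    exact (degreeOf_le_totalDegree P 0).trans hP.totalDegree_le

theorem finite_setOf_eval_cons_eq_zero {R : Type*} [CommRing R] [IsDomain R] {n : ℕ}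
    (P : MvPolynomial (Fin (n + 1)) R) {s : Fin n → R}
    (hs : eval s (finSuccEquiv R n P).leadingCoeff ≠ 0) :
    {y | eval (Fin.cons y s) P = 0}.Finite := by
  have hmap : Polynomial.map (eval s) (finSuccEquiv R n P) ≠ 0 := fun h =>
    hs (by rw [Polynomial.leadingCoeff, ← Polynomial.coeff_map, h, Polynomial.coeff_zero])
  refine (Polynomial.finite_setOfPred_isRoot hmap).subset fun y hy => ?_
  rwa [Set.mem_ofPred_eq, eval_eq_eval_mv_eval'] at hy

end MvPolynomial

/-- At a point where `X(ξ, t)` is tangent to `{Q = 0}`, this vector is proportional to `(t, ξ)`. -/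
noncomputable def augmentedGradient {K : Type*} [CommSemiring K] {n : ℕ}
    (Q : MvPolynomial (Fin n) K) : Fin (n + 1) → MvPolynomial (Fin n) K :=
  Fin.cons (∑ i, X i * pderiv i Q) fun i => pderiv i Q

namespace IsTangentHyperplane

variable {n : ℕ} {Q : MvPolynomial (Fin n) ℂ} {ξ : EuclideanSpace ℝ (Fin n)} {t : ℂ}

theorem exists_eval_augmentedGradient_eq_smul (h : IsTangentHyperplane Q ξ t) :
    ∃ (z : Fin n → ℂ) (c : ℂ), eval z Q = 0 ∧ c ≠ 0 ∧
      (fun j => eval z (augmentedGradient Q j)) = c • Fin.cons t fun i => (ξ i : ℂ) := by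
  obtain ⟨z, hQz, rfl, hgrad, c, hc⟩ := h
  refine ⟨z, c, hQz, fun h0 => hgrad (funext fun i => by simp [hc i, h0]), funext fun j => ?_⟩
  refine Fin.cases ?_ (fun i => ?_) j
  · simp only [augmentedGradient, Fin.cons_zero, map_sum, map_mul, eval_X, hc, Pi.smul_apply,
      smul_eq_mul, Finset.mul_sum]
    exact Finset.sum_congr rfl fun i _ => by ring
  · simp [augmentedGradient, hc]

theorem eval_cons_eq_zero {P : MvPolynomial (Fin (n + 1)) ℂ} {d : ℕ} (hP : P.IsHomogeneous d)
    (hQP : Q ∣ aeval (augmentedGradient Q) P) (h : IsTangentHyperplane Q ξ t) :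
    eval (Fin.cons t fun i => (ξ i : ℂ)) P = 0 := by
  obtain ⟨z, c, hQz, hc, hz⟩ := h.exists_eval_augmentedGradient_eq_smul
  obtain ⟨r, hr⟩ := hQP
  have hzP : eval z (aeval (augmentedGradient Q) P) = 0 := by rw [hr, map_mul, hQz, zero_mul]
  rw [show eval z (aeval (augmentedGradient Q) P) = eval (fun j => eval z (augmentedGradient Q j)) P
    from aeval_bind₁ z _ P, hz, hP.eval_smul] at hzP
  exact (mul_eq_zero.mp hzP).resolve_left (pow_ne_zero _ hc)

end IsTangentHyperplane

theorem finitely_many_tangent_hyperplanes_generic_direction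
    {n : ℕ} (hn : 2 ≤ n) (Q : MvPolynomial (Fin n) ℂ) (hQ : Q ≠ 0) :
    ∃ β : MvPolynomial (Fin n) ℝ,
      (∃ ξ₀ : EuclideanSpace ℝ (Fin n), ‖ξ₀‖ = 1 ∧
        MvPolynomial.eval (fun i => ξ₀ i) β ≠ 0) ∧
      ∀ ξ : EuclideanSpace ℝ (Fin n), ‖ξ‖ = 1 →
        MvPolynomial.eval (fun i => ξ i) β ≠ 0 →
        {t : ℂ | IsTangentHyperplane Q ξ t}.Finite := by
  obtain ⟨m, rfl⟩ : ∃ m, n = m + 1 := ⟨n - 1, by omega⟩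
  obtain ⟨d, P, hP0, hPd, hQP⟩ := exists_isHomogeneous_ne_zero_dvd_aeval hQ (augmentedGradient Q)
  have hlead : (MvPolynomial.finSuccEquiv ℂ _ P).leadingCoeff ≠ 0 := by simpa using hP0
  obtain ⟨β, hβ0, hβd, hβ⟩ := hPd.isHomogeneous_leadingCoeff_finSuccEquiv.exists_real_ne_zero hlead
  refine ⟨β, hβd.exists_norm_eq_one_eval_ne_zero hβ0, fun ξ _ hξ => ?_⟩
  exact (finite_setOf_eval_cons_eq_zero P (hβ _ hξ)).subset fun t ht =>
    IsTangentHyperplane.eval_cons_eq_zero hPd hQP ht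
end
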